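/- arXiv:2509.16667 — 7 statements merged into one kernel-verified Lean document; each statement's English description precedes it below -/
import Mathlib

section
/- For every positive integer n, (n+1)(2n+1) divides 2·C(3n,n); equivalently, 2/((n+1)(2n+1))·C(3n,n) is a positive integer. -/
/-! From `(k + 1) * C(m, k + 1) = (m - k) * C(m, k)` with `m = 3n`, `n + 1` divides `2n * C(3n, n)` and,
applied at `k = n - 1`, `2n + 1` divides `n * C(3n, n)`. Both divisors are coprime to `n` and to each
other, so their product divides `2 * C(3n, n)`, which is positive. -/

namespace Nat

theorem succ_dvd_sub_mul_choose (m k : ℕ) : k + 1 ∣ (m - k) * m.choose k :=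
  ⟨m.choose (k + 1), by rw [mul_comm, ← choose_succ_right_eq, mul_comm]⟩

theorem sub_succ_dvd_mul_choose {m k : ℕ} (h : k ≤ m) : m - k + 1 ∣ k * m.choose k := by
  simpa [Nat.sub_sub_self h, choose_symm h] using succ_dvd_sub_mul_choose m (m - k)

theorem succ_mul_two_mul_succ_dvd_two_mul_choose (n : ℕ) :
    (n + 1) * (2 * n + 1) ∣ 2 * (3 * n).choose n := by
  have hn : Coprime (n + 1) n := by simp
  have h2n : Coprime (2 * n + 1) n := by simp
  have h : Coprime (n + 1) (2 * n + 1) := by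
    rw [show 2 * n + 1 = n + (n + 1) by ring]; simp
  refine h.mul_dvd_of_dvd_of_dvd ?_ ?_
  · refine hn.dvd_of_dvd_mul_left ?_
    have := succ_dvd_sub_mul_choose (3 * n) n
    rw [show 3 * n - n = 2 * n by omega] at this
    exact this.trans ⟨1, by ring⟩
  · refine dvd_mul_of_dvd_right (h2n.dvd_of_dvd_mul_left ?_) 2
    simpa [show 3 * n - n + 1 = 2 * n + 1 by omega] using
      sub_succ_dvd_mul_choose (show n ≤ 3 * n by omega)

end Nat

theorem fighting_fish_count_is_pos_integer_general (n : ℕ) :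
    (n + 1) * (2 * n + 1) ∣ 2 * Nat.choose (3 * n) n ∧
    0 < 2 * Nat.choose (3 * n) n / ((n + 1) * (2 * n + 1)) := by
  have hdvd := Nat.succ_mul_two_mul_succ_dvd_two_mul_choose n
  have hpos : 0 < 2 * Nat.choose (3 * n) n :=
    Nat.mul_pos two_pos (Nat.choose_pos (by omega))
  exact ⟨hdvd, Nat.div_pos (Nat.le_of_dvd hpos hdvd) (by positivity)⟩

theorem fighting_fish_count_is_pos_integer (n : ℕ) (hn : 0 < n) :
    (n + 1) * (2 * n + 1) ∣ 2 * Nat.choose (3 * n) n ∧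
    0 < 2 * Nat.choose (3 * n) n / ((n + 1) * (2 * n + 1)) :=
  fighting_fish_count_is_pos_integer_general n
end

section
/- For every natural number n, the number of ternary trees with n nodes equals C(3n,n)/(2n+1). -/
/-!
A forest of `k + 1` ternary trees with `n + 1` nodes either begins with the empty tree, or its
first tree splits at the root into three subtrees, leaving a forest of `k + 3` trees with `n`
nodes. Hence the number `F k n` of such forests satisfies
`F (k + 1) (n + 1) = F k (n + 1) + F (k + 3) n`, with `F k 0 = 1` and `F 0 (n + 1) = 0`.
The Raney numbers `k / (3n + k) * choose (3n + k) n` satisfy the same recursion, and a single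
tree is a forest with `k = 1`, where `choose (3n + 1) n / (3n + 1) = choose (3n) n / (2n + 1)`.
-/

/-- A ternary tree: empty, or a root with left, middle and right subtrees. -/
inductive TernaryTree : Type
  | leaf : TernaryTree
  | node : TernaryTree → TernaryTree → TernaryTree → TernaryTree

/-- Number of nodes of a ternary tree. -/
def TernaryTree.size : TernaryTree → ℕ
  | .leaf => 0
  | .node l m r => 1 + l.size + m.size + r.size

/-- All nodes of `t` have nonnegative abscissa, when the root of `t` has abscissa `j`. -/
def TernaryTree.NonnegAbs : TernaryTree → ℤ → Prop
  | .leaf, _ => True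
  | .node l m r, j =>
      0 ≤ j ∧ l.NonnegAbs (j + 1) ∧ m.NonnegAbs j ∧ r.NonnegAbs (j - 1)

/-- A left ternary tree: nonempty with all abscissas nonnegative (root at abscissa 0). -/
def TernaryTree.IsLeft (t : TernaryTree) : Prop :=
  t ≠ .leaf ∧ t.NonnegAbs 0

/-- Number of nodes of odd abscissa, when the root has abscissa `j`. -/
def TernaryTree.oddCount : TernaryTree → ℤ → ℕ
  | .leaf, _ => 0
  | .node l m r, j =>
      (if Odd j then 1 else 0) + l.oddCount (j + 1) + m.oddCount j + r.oddCount (j - 1)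

namespace TernaryTree

open Nat

def Forest (k n : ℕ) : Type :=
  {ts : List TernaryTree // ts.length = k ∧ (ts.map size).sum = n}

theorem size_eq_zero_iff {t : TernaryTree} : t.size = 0 ↔ t = leaf := by
  cases t <;> simp [size]

instance (k : ℕ) : Unique (Forest k 0) where
  default := ⟨List.replicate k leaf, by simp [size]⟩
  uniq := by
    rintro ⟨ts, hlen, hsum⟩
    refine Subtype.ext (List.eq_replicate_iff.2 ⟨hlen, fun t ht => ?_⟩)
    exact size_eq_zero_iff.1 (List.sum_eq_zero_iff.1 hsum _ (List.mem_map_of_mem ht))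

instance (n : ℕ) : IsEmpty (Forest 0 (n + 1)) :=
  ⟨fun ⟨ts, hlen, hsum⟩ => by simp [List.length_eq_zero_iff.1 hlen] at hsum⟩

def forestSuccEquiv (k n : ℕ) : Forest (k + 1) (n + 1) ≃ Forest k (n + 1) ⊕ Forest (k + 3) n where
  toFun
    | ⟨leaf :: ts, h⟩ => .inl ⟨ts, by simpa [size] using h⟩
    | ⟨node l m r :: ts, h⟩ => .inr ⟨l :: m :: r :: ts, by simp [size] at h ⊢; omega⟩
  invFun
    | .inl ⟨ts, h⟩ => ⟨leaf :: ts, by simpa [size] using h⟩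
    | .inr ⟨l :: m :: r :: ts, h⟩ => ⟨node l m r :: ts, by simp [size] at h ⊢; omega⟩
  left_inv := by rintro ⟨_ | ⟨_ | _, _⟩, h, -⟩ <;> first | rfl | simp at h
  right_inv := by
    rintro (⟨_, _⟩ | ⟨_ | ⟨_, _ | ⟨_, _ | ⟨_, _⟩⟩⟩, h, -⟩) <;> first | rfl | simp at h

instance (k n : ℕ) : Finite (Forest k n) := by
  induction n generalizing k with
  | zero => infer_instance
  | succ n ihn =>
    induction k with
    | zero => infer_instance
    | succ k ihk => exact Finite.of_equiv _ (forestSuccEquiv k n).symm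

theorem card_forest_succ_succ (k n : ℕ) :
    Nat.card (Forest (k + 1) (n + 1)) =
      Nat.card (Forest k (n + 1)) + Nat.card (Forest (k + 3) n) := by
  rw [Nat.card_congr (forestSuccEquiv k n), Nat.card_sum]

/-- The Raney number `k / (3n + k) * choose (3n + k) n`, cleared of denominators. -/
theorem card_forest_mul (k n : ℕ) :
    Nat.card (Forest k n) * (n ! * (2 * n + k)!) * (3 * n + k) = k * (3 * n + k)! := by
  induction n generalizing k with
  | zero => simp [mul_comm]
  | succ n ihn =>
    induction k with
    | zero => simp
    | succ k ihk =>
      have hk3 := ihn (k + 3)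
      rw [card_forest_succ_succ]
      rw [show 2 * (n + 1) + (k + 1) = 2 * n + k + 2 + 1 by omega,
        show 3 * (n + 1) + (k + 1) = 3 * n + k + 3 + 1 by omega,
        factorial_succ (2 * n + k + 2), factorial_succ (3 * n + k + 3)]
      rw [show 2 * (n + 1) + k = 2 * n + k + 2 by omega,
        show 3 * (n + 1) + k = 3 * n + k + 3 by omega] at ihk
      rw [show 2 * n + (k + 3) = 2 * n + k + 2 + 1 by omega,
        show 3 * n + (k + 3) = 3 * n + k + 3 by omega, factorial_succ (2 * n + k + 2)] at hk3
      rw [factorial_succ n] at *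
      zify at ihk hk3 ⊢
      refine mul_right_cancel₀ (b := (3 * (n : ℤ) + k + 3)) (by positivity) ?_
      linear_combination ((2 * (n : ℤ) + k + 3) * (3 * n + k + 4)) * ihk +
        (((n : ℤ) + 1) * (3 * n + k + 4)) * hk3

def sizeEqEquivForestOne (n : ℕ) : {t : TernaryTree // t.size = n} ≃ Forest 1 n where
  toFun t := ⟨[t.1], by simp [t.2]⟩
  invFun
    | ⟨[t], h⟩ => ⟨t, by simpa using h⟩
  left_inv _ := rfl
  right_inv := by rintro ⟨_ | ⟨_, _ | _⟩, h, -⟩ <;> first | rfl | simp at h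

theorem card_forest_one_mul (n : ℕ) : Nat.card (Forest 1 n) * (2 * n + 1) = (3 * n).choose n := by
  have h := card_forest_mul 1 n
  rw [factorial_succ (3 * n), factorial_succ (2 * n)] at h
  have hchoose := choose_mul_factorial_mul_factorial (show n ≤ 3 * n by omega)
  rw [show 3 * n - n = 2 * n by omega] at hchoose
  refine Nat.eq_of_mul_eq_mul_right (by positivity : 0 < n ! * (2 * n)! * (3 * n + 1)) ?_
  zify at h hchoose ⊢
  linear_combination h - (3 * (n : ℤ) + 1) * hchoose

end TernaryTree

theorem ternary_tree_count (n : ℕ) :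
    Nat.card {T : TernaryTree // T.size = n} = Nat.choose (3 * n) n / (2 * n + 1) := by
  rw [Nat.card_congr (TernaryTree.sizeEqEquivForestOne n), ← TernaryTree.card_forest_one_mul,
    Nat.mul_div_cancel _ (by omega)]
end

section
/- For every natural number n, the number of ordered pairs (T1,T2) of ternary trees with a total of n nodes equals C(3n+1,n)/(n+1). -/
/-!
Write a forest in preorder, a node as an up-step `+2` and an empty subtree as a down-step `-1`.
This identifies pairs of ternary trees with `n` nodes in total with the words of length
`3n + 2` with `n` up-steps whose walk first reaches `-2` at its last step. By the cycle lemma,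
exactly two of the `3n + 2` rotations of any word with `n` up-steps have this property, so
`(3n + 2) * #pairs = 2 * C(3n + 2, n) = (3n + 2) * C(3n + 1, n) / (n + 1)`.
-/

open Finset

def IsRecordMin (S : ℕ → ℤ) (T : ℕ) : Prop :=
  ∀ j < T, S T < S j

instance (S : ℕ → ℤ) : DecidablePred (IsRecordMin S) :=
  fun T => inferInstanceAs (Decidable (∀ j < T, S T < S j))

theorem exists_isRecordMin_eq {S : ℕ → ℤ} (hstep : ∀ j, S j - 1 ≤ S (j + 1)) {v : ℤ}
    {N : ℕ} (h0 : v < S 0) (hN : S N ≤ v) : ∃ T ≤ N, S T = v ∧ IsRecordMin S T := by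
  have hex : ∃ T, S T ≤ v := ⟨N, hN⟩
  set T := Nat.find hex
  have hbefore : ∀ j < T, v < S j := fun j hj => not_le.1 (Nat.find_min hex hj)
  have hT : S T ≤ v := Nat.find_spec hex
  have hpos : 0 < T := Nat.pos_of_ne_zero fun h => by rw [h] at hT; omega
  have hval : S T = v := by
    have := hstep (T - 1)
    have := hbefore (T - 1) (by omega)
    rw [Nat.sub_add_cancel hpos] at *
    omega
  exact ⟨T, Nat.find_min' hex hN, hval, fun j hj => hval ▸ hbefore j hj⟩

/-- The records in `[L, 2L)` are the first passages through the `K` levels just below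
`min_{j < L} S j`. -/
theorem card_filter_isRecordMin_add {S : ℕ → ℤ} (hstep : ∀ j, S j - 1 ≤ S (j + 1))
    {L K : ℕ} (hL : 0 < L) (hper : ∀ j < L, S (j + L) = S j - K) :
    #{i ∈ range L | IsRecordMin S (i + L)} = K := by
  obtain ⟨j₀, hj₀, hmin⟩ := exists_min_image (range L) S ⟨0, mem_range.2 hL⟩
  rw [mem_range] at hj₀
  have hmin' : ∀ j < L, S j₀ ≤ S j := fun j hj => hmin j (mem_range.2 hj)
  suffices #{i ∈ range L | IsRecordMin S (i + L)} = #(Icc (S j₀ - K) (S j₀ - 1)) by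
    rw [this, Int.card_Icc]; omega
  refine card_nbij (fun i => S (i + L)) (fun i hi => ?_) (fun i hi i' hi' h => ?_)
    (fun v hv => ?_)
  · simp only [coe_filter, mem_range, Set.mem_ofPred_eq] at hi
    have := hi.2 j₀ (by omega)
    have := hmin' i hi.1
    have := hper i hi.1
    simp only [coe_Icc, Set.mem_Icc]
    omega
  · simp only [coe_filter, mem_range, Set.mem_ofPred_eq] at hi hi'
    by_contra hne
    rcases Nat.lt_or_gt_of_ne hne with hlt | hlt
    · exact (hi'.2 (i + L) (by omega)).ne' h
    · exact (hi.2 (i' + L) (by omega)).ne h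
  · simp only [coe_Icc, Set.mem_Icc] at hv
    obtain ⟨T, hTle, hTv, hT⟩ := exists_isRecordMin_eq hstep (v := v) (N := j₀ + L)
      (by have := hmin' 0 hL; omega) (by rw [hper j₀ hj₀]; omega)
    have hLT : L ≤ T := by
      by_contra hlt
      have := hmin' T (by omega)
      omega
    refine ⟨T - L, ?_, ?_⟩
    · simp only [coe_filter, mem_range, Set.mem_ofPred_eq, Nat.sub_add_cancel hLT]
      exact ⟨by omega, hT⟩
    · simp only [Nat.sub_add_cancel hLT, hTv]

namespace List

def IsFirstPassage (w : List ℤ) (k : ℤ) : Prop :=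
  w.sum = -k ∧ ∀ j < w.length, -k < (w.take j).sum

instance (w : List ℤ) (k : ℤ) : Decidable (w.IsFirstPassage k) :=
  inferInstanceAs (Decidable (_ ∧ _))

theorem isFirstPassage_nil {k : ℤ} : IsFirstPassage [] k ↔ k = 0 := by
  simp [IsFirstPassage, eq_comm]

theorem isFirstPassage_cons {x k : ℤ} {w : List ℤ} :
    IsFirstPassage (x :: w) k ↔ 0 < k ∧ IsFirstPassage w (k + x) := by
  simp only [IsFirstPassage, sum_cons, length_cons, Nat.forall_lt_succ_left, take_zero, sum_nil,
    take_succ_cons]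
  constructor
  · rintro ⟨hsum, h0, htake⟩
    exact ⟨by omega, by omega, fun j hj => by have := htake j hj; omega⟩
  · rintro ⟨hk, hsum, htake⟩
    exact ⟨by omega, by omega, fun j hj => by have := htake j hj; omega⟩

theorem sum_take_sub_one_le {w : List ℤ} (hw : ∀ x ∈ w, -1 ≤ x) (j : ℕ) :
    (w.take j).sum - 1 ≤ (w.take (j + 1)).sum := by
  rcases lt_or_ge j w.length with hj | hj
  · rw [sum_take_succ _ _ hj]
    linarith [hw _ (getElem_mem hj)]
  · rw [take_of_length_le hj, take_of_length_le (by omega)]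
    omega

theorem sum_take_rotate {w : List ℤ} {i k : ℕ} (hi : i ≤ w.length) (hk : k ≤ w.length) :
    ((w.rotate i).take k).sum = ((w ++ w).take (i + k)).sum - ((w ++ w).take i).sum := by
  have hrot : (w.rotate i).take k = ((w ++ w).drop i).take k := by
    rw [rotate_eq_drop_append_take hi, drop_append_of_le_length hi, take_append, take_append,
      take_take, min_eq_left (by simp; omega)]
  rw [hrot, take_add, sum_append]
  ring

theorem sum_take_append_self_add_length (w : List ℤ) (j : ℕ) :
    ((w ++ w).take (j + w.length)).sum = (w.take j).sum + w.sum := by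
  rw [take_append, take_of_length_le (by omega), Nat.add_sub_cancel, sum_append, add_comm]

theorem isFirstPassage_rotate_iff {w : List ℤ} {K : ℕ} (hsum : w.sum = -K) {i : ℕ}
    (hi : i < w.length) :
    IsFirstPassage (w.rotate i) K ↔
      IsRecordMin (fun j => ((w ++ w).take j).sum) (i + w.length) := by
  set S := fun j => ((w ++ w).take j).sum
  have hper : ∀ j ≤ w.length, S (j + w.length) = S j - K := fun j hj => by
    simp only [S, sum_take_append_self_add_length, take_append_of_le_length hj, hsum]; ring
  have hrot : ∀ k ≤ w.length, ((w.rotate i).take k).sum = S (i + k) - S i :=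
    fun k hk => sum_take_rotate hi.le hk
  have hend := hper i hi.le
  simp only [IsFirstPassage, (rotate_perm w i).sum_eq, hsum, length_rotate, true_and]
  constructor
  · intro h j hj
    rcases le_or_gt i j with hij | hji
    · have := hrot (j - i) (by omega)
      have := h (j - i) (by omega)
      rw [Nat.add_sub_cancel' hij] at *
      omega
    · -- `S j = S (j + L) + K`, and `j + L` lies in the window `[i, i + L)`
      have := hrot (j + w.length - i) (by omega)
      have := h (j + w.length - i) (by omega)
      have := hper j (by omega)
      rw [Nat.add_sub_cancel' (by omega)] at *
      omega
  · intro h k hk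
    rw [hrot k hk.le]
    have := h (i + k) (by omega)
    omega

theorem card_filter_isFirstPassage_rotate {w : List ℤ} (hw : ∀ x ∈ w, -1 ≤ x) {K : ℕ}
    (hsum : w.sum = -K) : #{i ∈ Finset.range w.length | (w.rotate i).IsFirstPassage K} = K := by
  rcases Nat.eq_zero_or_pos w.length with hL | hL
  · rw [length_eq_zero_iff.1 hL, sum_nil] at hsum
    rw [hL, Finset.range_zero, Finset.filter_empty, Finset.card_empty]
    omega
  rw [Finset.filter_congr fun i hi => isFirstPassage_rotate_iff hsum (Finset.mem_range.1 hi)]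
  refine card_filter_isRecordMin_add (fun j => sum_take_sub_one_le ?_ j) hL fun j hj => ?_
  · simpa using hw
  · simp only [sum_take_append_self_add_length, take_append_of_le_length hj.le, hsum]
    ring

end List

theorem sum_card_filter_rotate {α : Type*} {A : Finset (List α)} {L : ℕ}
    (hlen : ∀ w ∈ A, w.length = L) (hrot : ∀ w ∈ A, ∀ i, w.rotate i ∈ A)
    (P : List α → Prop) [DecidablePred P] :
    ∑ w ∈ A, #{i ∈ range L | P (w.rotate i)} = L * #{w ∈ A | P w} := by
  have hrotate : ∀ i < L, #{w ∈ A | P (w.rotate i)} = #{w ∈ A | P w} := by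
    intro i hi
    have hinv : ∀ w ∈ A,
        (w.rotate i).rotate (L - i) = w ∧ (w.rotate (L - i)).rotate i = w := by
      intro w hw
      have hL : w.rotate L = w := hlen w hw ▸ w.rotate_length
      simp only [List.rotate_rotate, Nat.add_sub_cancel' hi.le, Nat.sub_add_cancel hi.le, hL,
        and_self]
    refine card_nbij' (·.rotate i) (·.rotate (L - i)) ?_ ?_ ?_ ?_ <;> intro w hw <;>
      simp only [coe_filter, Set.mem_ofPred_eq] at hw ⊢
    · exact ⟨hrot w hw.1 i, hw.2⟩
    · exact ⟨hrot w hw.1 _, by rw [(hinv w hw.1).2]; exact hw.2⟩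
    · exact (hinv w hw.1).1
    · exact (hinv w hw.1).2
  calc ∑ w ∈ A, #{i ∈ range L | P (w.rotate i)}
      = ∑ i ∈ range L, #{w ∈ A | P (w.rotate i)} := by simp only [card_filter]; exact sum_comm
    _ = ∑ i ∈ range L, #{w ∈ A | P w} := sum_congr rfl fun i hi => hrotate i (mem_range.1 hi)
    _ = L * #{w ∈ A | P w} := by rw [sum_const, card_range, smul_eq_mul]

def boolWords : ℕ → ℕ → Finset (List Bool)
  | 0, 0 => {[]}
  | 0, _ + 1 => ∅
  | L + 1, 0 => (boolWords L 0).map ⟨List.cons false, List.cons_injective⟩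
  | L + 1, k + 1 => (boolWords L (k + 1)).map ⟨List.cons false, List.cons_injective⟩ ∪
      (boolWords L k).map ⟨List.cons true, List.cons_injective⟩

theorem mem_boolWords {L k : ℕ} {w : List Bool} :
    w ∈ boolWords L k ↔ w.length = L ∧ w.count true = k := by
  induction L generalizing k w with
  | zero => cases k <;> simp +contextual [boolWords]
  | succ L ih =>
    cases w with
    | nil => cases k <;> simp [boolWords]
    | cons b w => cases k <;> cases b <;> simp [boolWords, ih]

theorem card_boolWords (L k : ℕ) : #(boolWords L k) = L.choose k := by
  induction L generalizing k with
  | zero => cases k <;> simp [boolWords]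
  | succ L ih =>
    cases k with
    | zero => simp [boolWords, ih]
    | succ k =>
      rw [boolWords, card_union_of_disjoint, card_map, card_map, ih, ih, Nat.choose_succ_succ',
        add_comm]
      simp [disjoint_left]

namespace TernaryTree

-- The step of a letter is its number of children minus one.
def codeStep : Bool → ℤ
  | true => 2
  | false => -1

def forestCode : List TernaryTree → List Bool
  | [] => []
  | leaf :: ts => false :: forestCode ts
  | node l m r :: ts => true :: forestCode (l :: m :: r :: ts)
termination_by ts => (ts.map fun t => 3 * t.size + 1).sum
decreasing_by all_goals simp only [List.map_cons, List.sum_cons, size]; omega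

theorem forestCode_injective : Function.Injective forestCode := by
  intro ts us h
  induction ts using forestCode.induct generalizing us with
  | case1 => cases us with
    | nil => rfl
    | cons u us => cases u <;> simp [forestCode] at h
  | case2 ts ih =>
    rcases us with _ | ⟨_ | ⟨l, m, r⟩, us⟩ <;>
      simp only [forestCode, List.cons.injEq, reduceCtorEq, Bool.false_eq_true, false_and,
        true_and] at h
    rw [ih h]
  | case3 l m r ts ih =>
    rcases us with _ | ⟨_ | ⟨l', m', r'⟩, us⟩ <;>
      simp only [forestCode, List.cons.injEq, reduceCtorEq, Bool.true_eq_false, false_and,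
        true_and] at h
    simpa [and_assoc] using ih h

theorem count_true_forestCode (ts : List TernaryTree) :
    (forestCode ts).count true = (ts.map size).sum := by
  fun_induction forestCode ts with
  | case1 => rfl
  | case2 ts ih => simp [ih, size]
  | case3 l m r ts ih =>
    simp only [List.count_cons_self, ih, List.map_cons, List.sum_cons, size]
    ring

theorem sum_map_codeStep (w : List Bool) :
    (w.map codeStep).sum = 3 * w.count true - w.length := by
  induction w with
  | nil => simp
  | cons b w ih =>
    cases b <;> simp [codeStep, ih] <;> ring

theorem isFirstPassage_forestCode (ts : List TernaryTree) :
    ((forestCode ts).map codeStep).IsFirstPassage ts.length := by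
  fun_induction forestCode ts with
  | case1 => exact List.isFirstPassage_nil.2 rfl
  | case2 ts ih =>
    rw [List.map_cons, List.isFirstPassage_cons]
    exact ⟨by simp, by simpa [codeStep] using ih⟩
  | case3 l m r ts ih =>
    rw [List.map_cons, List.isFirstPassage_cons]
    refine ⟨by simp, ?_⟩
    convert ih using 2
    simp only [List.length_cons, Nat.cast_add, Nat.cast_one, codeStep]
    ring

theorem exists_forestCode_eq {w : List Bool} {k : ℤ} (h : (w.map codeStep).IsFirstPassage k) :
    ∃ ts : List TernaryTree, (ts.length : ℤ) = k ∧ forestCode ts = w := by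
  induction w generalizing k with
  | nil => exact ⟨[], by simpa using (List.isFirstPassage_nil.1 h).symm, by simp [forestCode]⟩
  | cons b w ih =>
    rw [List.map_cons, List.isFirstPassage_cons] at h
    obtain ⟨ts, hlen, hts⟩ := ih h.2
    cases b with
    | false =>
      refine ⟨leaf :: ts, ?_, by rw [forestCode, hts]⟩
      simp only [List.length_cons, codeStep] at hlen ⊢
      omega
    | true =>
      match ts, hlen with
      | l :: m :: r :: ts, hlen =>
        refine ⟨node l m r :: ts, ?_, by rw [forestCode, hts]⟩
        simp only [List.length_cons, codeStep] at hlen ⊢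
        omega
      | [], hlen | [_], hlen | [_, _], hlen =>
        simp only [List.length_cons, List.length_nil, codeStep] at hlen
        omega

theorem card_filter_isFirstPassage_boolWords (K n : ℕ) :
    (3 * n + K) * #{w ∈ boolWords (3 * n + K) n | (w.map codeStep).IsFirstPassage K} =
      K * (3 * n + K).choose n := by
  have hA : ∀ w ∈ boolWords (3 * n + K) n, w.length = 3 * n + K ∧ w.count true = n :=
    fun w hw => mem_boolWords.1 hw
  have hrot : ∀ w ∈ boolWords (3 * n + K) n, ∀ i, w.rotate i ∈ boolWords (3 * n + K) n :=
    fun w hw i => mem_boolWords.2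
      ⟨by rw [List.length_rotate, (hA w hw).1], by rw [(w.rotate_perm i).count_eq, (hA w hw).2]⟩
  have hcycle : ∀ w ∈ boolWords (3 * n + K) n,
      #{i ∈ range (3 * n + K) | ((w.rotate i).map codeStep).IsFirstPassage K} = K := by
    intro w hw
    have hsum : (w.map codeStep).sum = -K := by
      rw [sum_map_codeStep, (hA w hw).1, (hA w hw).2]; push_cast; ring
    have hstep : ∀ x ∈ w.map codeStep, -1 ≤ x := by
      simp only [List.mem_map]
      rintro _ ⟨b, -, rfl⟩
      cases b <;> decide
    simpa [List.map_rotate, (hA w hw).1] using List.card_filter_isFirstPassage_rotate hstep hsum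
  rw [← sum_card_filter_rotate (fun w hw => (hA w hw).1) hrot, sum_congr rfl hcycle, sum_const,
    card_boolWords, smul_eq_mul, mul_comm]

theorem card_pairs_eq_card_isFirstPassage (n : ℕ) :
    Nat.card {p : TernaryTree × TernaryTree // p.1.size + p.2.size = n} =
      #{w ∈ boolWords (3 * n + 2) n | (w.map codeStep).IsFirstPassage 2} := by
  rw [← Nat.card_eq_finsetCard]
  refine Nat.card_eq_of_bijective (fun p => ⟨forestCode [p.1.1, p.1.2], ?_⟩) ⟨?_, ?_⟩
  · have hcount := count_true_forestCode [p.1.1, p.1.2]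
    have hpass := isFirstPassage_forestCode [p.1.1, p.1.2]
    have hsum := sum_map_codeStep (forestCode [p.1.1, p.1.2])
    simp only [List.map_cons, List.map_nil, List.sum_cons, List.sum_nil, add_zero, p.2] at hcount
    rw [mem_filter, mem_boolWords]
    simp only [List.length_cons, List.length_nil] at hpass
    refine ⟨⟨?_, hcount⟩, by exact_mod_cast hpass⟩
    have := hpass.1
    omega
  · rintro ⟨⟨a, b⟩, _⟩ ⟨⟨c, d⟩, _⟩ h
    simpa using forestCode_injective (congrArg Subtype.val h)
  · rintro ⟨w, hw⟩
    rw [mem_filter, mem_boolWords] at hw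
    obtain ⟨ts, hlen, rfl⟩ := exists_forestCode_eq hw.2
    match ts, hlen with
    | [a, b], _ =>
      refine ⟨⟨(a, b), ?_⟩, rfl⟩
      simpa [count_true_forestCode] using hw.1.2

end TernaryTree

theorem eq_choose_div_of_mul_eq {n x : ℕ} (h : (3 * n + 2) * x = 2 * (3 * n + 2).choose n) :
    x = (3 * n + 1).choose n / (n + 1) := by
  have hchoose : (3 * n + 1).choose n * (3 * n + 2) = (3 * n + 2).choose n * (2 * n + 2) := by
    rw [Nat.choose_mul_succ_eq]; congr 2; omega
  refine (Nat.div_eq_of_eq_mul_left (by omega) ?_).symm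
  apply Nat.eq_of_mul_eq_mul_left (show 0 < 3 * n + 2 by omega)
  calc (3 * n + 2) * (3 * n + 1).choose n = (n + 1) * (2 * (3 * n + 2).choose n) := by
        rw [mul_comm, hchoose]; ring
    _ = (3 * n + 2) * (x * (n + 1)) := by rw [← h]; ring

theorem pairs_of_ternary_trees_count (n : ℕ) :
    Nat.card {p : TernaryTree × TernaryTree // p.1.size + p.2.size = n} =
      Nat.choose (3 * n + 1) n / (n + 1) := by
  rw [TernaryTree.card_pairs_eq_card_isFirstPassage]
  apply eq_choose_div_of_mul_eq
  exact_mod_cast TernaryTree.card_filter_isFirstPassage_boolWords 2 n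
end

section
/- For all natural numbers i, j, the quantity C(2i+j+1, j)·C(i+2j+1, i)/((i+1)(j+1)) is a positive integer. -/
/-!
By Legendre's formula it suffices (Landau's criterion) that for every modulus `m ≥ 2`
`⌊(i+1)/m⌋ + ⌊(j+1)/m⌋ + ⌊(2i+1)/m⌋ + ⌊(2j+1)/m⌋ ≤ ⌊(2i+j+1)/m⌋ + ⌊(i+2j+1)/m⌋`,
since then `(i+1)! (j+1)! (2i+1)! (2j+1)!` divides `(2i+j+1)! (i+2j+1)!`. Both sides of the
inequality change by the same amount when `i` or `j` is shifted by `m`, so it suffices to check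
it for residues `i, j < m`.
-/

open Nat Finset

theorem Nat.prod_factorial_dvd_prod_factorial_of_sum_div_le {ι κ : Type*} (s : Finset ι)
    (t : Finset κ) (a : ι → ℕ) (b : κ → ℕ)
    (h : ∀ m, 2 ≤ m → ∑ k ∈ s, a k / m ≤ ∑ l ∈ t, b l / m) :
    ∏ k ∈ s, (a k)! ∣ ∏ l ∈ t, (b l)! := by
  rw [← factorization_prime_le_iff_dvd (by positivity) (by positivity)]
  intro p hp
  -- a common cut-off for Legendre's formula, so that the two double sums can be swapped
  set N := ∑ k ∈ s, a k + ∑ l ∈ t, b l + 1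
  have hlog {n : ℕ} (hn : n < N) : log p n < N := (log_le_self p n).trans_lt hn
  have ha (k) (hk : k ∈ s) : a k < N := by
    have := single_le_sum (f := a) (fun _ _ => zero_le _) hk; omega
  have hb (l) (hl : l ∈ t) : b l < N := by
    have := single_le_sum (f := b) (fun _ _ => zero_le _) hl; omega
  rw [factorization_prod fun _ _ => factorial_ne_zero _,
    factorization_prod fun _ _ => factorial_ne_zero _]
  simp only [Finsupp.coe_finsetSum, Finset.sum_apply]
  rw [sum_congr rfl fun k hk => factorization_factorial hp (hlog (ha k hk)),
    sum_congr rfl fun l hl => factorization_factorial hp (hlog (hb l hl)), sum_comm,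
    sum_comm (s := t)]
  exact sum_le_sum fun n hn => h _ (one_lt_pow (by simp at hn; omega) hp.one_lt)

theorem div_sum_le_div_sum_of_lt {m r t : ℕ} (hm : 2 ≤ m) (hr : r < m) (ht : t < m) :
    (r + 1) / m + (t + 1) / m + (2 * r + 1) / m + (2 * t + 1) / m ≤
      (2 * r + t + 1) / m + (r + 2 * t + 1) / m := by
  -- every quotient below is at most `2`, so it is pinned down by the cases `k = 1, 2`
  have key (x k : ℕ) : k ≤ x / m ↔ k * m ≤ x := Nat.le_div_iff_mul_le (by omega)
  have := key (2 * r + t + 1) 1; have := key (2 * r + t + 1) 2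
  have := key (r + 2 * t + 1) 1; have := key (r + 2 * t + 1) 2
  have := key (r + 1) 1; have := key (r + 1) 2; have := key (t + 1) 1; have := key (t + 1) 2
  have := key (2 * r + 1) 1; have := key (2 * r + 1) 2
  have := key (2 * t + 1) 1; have := key (2 * t + 1) 2
  generalize (2 * r + t + 1) / m = a at *
  generalize (r + 2 * t + 1) / m = b at *
  generalize (r + 1) / m = c at *
  generalize (t + 1) / m = d at *
  generalize (2 * r + 1) / m = e at *
  generalize (2 * t + 1) / m = f at *
  omega

theorem div_sum_le_div_sum {m : ℕ} (hm : 2 ≤ m) (i j : ℕ) :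
    (i + 1) / m + (j + 1) / m + (2 * i + 1) / m + (2 * j + 1) / m ≤
      (2 * i + j + 1) / m + (i + 2 * j + 1) / m := by
  obtain ⟨q, r, hr, rfl⟩ : ∃ q r, r < m ∧ r + m * q = i :=
    ⟨i / m, i % m, mod_lt _ (by omega), mod_add_div i m⟩
  obtain ⟨s, t, ht, rfl⟩ : ∃ s t, t < m ∧ t + m * s = j :=
    ⟨j / m, j % m, mod_lt _ (by omega), mod_add_div j m⟩
  have hdiv (x y : ℕ) : (x + m * y) / m = x / m + y := add_mul_div_left _ _ (by omega)
  rw [show r + m * q + 1 = r + 1 + m * q by ring, show t + m * s + 1 = t + 1 + m * s by ring,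
    show 2 * (r + m * q) + 1 = 2 * r + 1 + m * (2 * q) by ring,
    show 2 * (t + m * s) + 1 = 2 * t + 1 + m * (2 * s) by ring,
    show 2 * (r + m * q) + (t + m * s) + 1 = 2 * r + t + 1 + m * (2 * q + s) by ring,
    show r + m * q + 2 * (t + m * s) + 1 = r + 2 * t + 1 + m * (q + 2 * s) by ring]
  simp only [hdiv]
  have := div_sum_le_div_sum_of_lt hm hr ht
  omega

theorem factorial_mul_factorial_dvd (i j : ℕ) :
    (i + 1)! * (j + 1)! * (2 * i + 1)! * (2 * j + 1)! ∣ (2 * i + j + 1)! * (i + 2 * j + 1)! := by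
  have := prod_factorial_dvd_prod_factorial_of_sum_div_le univ univ
    ![i + 1, j + 1, 2 * i + 1, 2 * j + 1] ![2 * i + j + 1, i + 2 * j + 1] fun m hm => by
      simpa [Fin.sum_univ_four, add_assoc] using div_sum_le_div_sum hm i j
  simpa [Fin.prod_univ_four, mul_assoc] using this

theorem choose_mul_choose_mul_factorials (i j : ℕ) :
    (2 * i + j + 1).choose j * (i + 2 * j + 1).choose i *
        (i ! * j ! * (2 * i + 1)! * (2 * j + 1)!) = (2 * i + j + 1)! * (i + 2 * j + 1)! := by
  have h₁ := add_choose_mul_factorial_mul_factorial (2 * i + 1) j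
  have h₂ := add_choose_mul_factorial_mul_factorial (2 * j + 1) i
  rw [show 2 * i + 1 + j = 2 * i + j + 1 by ring] at h₁
  rw [show 2 * j + 1 + i = i + 2 * j + 1 by ring] at h₂
  rw [← h₁, ← h₂]
  ring

theorem two_param_formula_pos_integer (i j : ℕ) :
    (i + 1) * (j + 1) ∣ Nat.choose (2 * i + j + 1) j * Nat.choose (i + 2 * j + 1) i ∧
    0 < Nat.choose (2 * i + j + 1) j * Nat.choose (i + 2 * j + 1) i / ((i + 1) * (j + 1)) := by
  have hdvd : (i + 1) * (j + 1) ∣ (2 * i + j + 1).choose j * (i + 2 * j + 1).choose i := by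
    have h := factorial_mul_factorial_dvd i j
    rw [← choose_mul_choose_mul_factorials, factorial_succ, factorial_succ,
      show (i + 1) * i ! * ((j + 1) * j !) * (2 * i + 1)! * (2 * j + 1)! =
        (i + 1) * (j + 1) * (i ! * j ! * (2 * i + 1)! * (2 * j + 1)!) by ring] at h
    exact (Nat.mul_dvd_mul_iff_right (by positivity)).mp h
  have hpos : 0 < (2 * i + j + 1).choose j * (i + 2 * j + 1).choose i :=
    Nat.mul_pos (choose_pos (by omega)) (choose_pos (by omega))
  exact ⟨hdvd, Nat.div_pos (le_of_dvd hpos hdvd) (by positivity)⟩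
end

section
/- For all positive integers n, summing the two-parameter formula gives the fighting fish count: the sum over i+j = n−1 (i, j ≥ 0) of C(2i+j+1, j)·C(i+2j+1, i)/((i+1)(j+1)) equals 2·C(3n,n)/((n+1)(2n+1)). -/
/-!
Each summand `t i j = C(2i+j+1, j) C(i+2j+1, i) / ((i+1)(j+1))` is an integer, prime by prime:
if `p ∣ 2j+1` then `p ∤ j+1` and `vₚ(i+1) ≤ vₚ C(2i+j+1, j)`, otherwise `vₚ(i+1) ≤ vₚ C(i+2j+1, i)`,
and symmetrically for `j+1`. Over `ℚ`, `t` is hypergeometric in both indices, and Zeilberger's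
creative telescoping gives a rational certificate whose differences along the antidiagonal
`i + j = m` collapse, yielding `2(m+3)(2m+5) S(m+1) = 3(3m+4)(3m+5) S(m)` for the antidiagonal sums.
The closed form `2 C(3n, n) / ((n+1)(2n+1))` obeys the same recurrence; as the sum is an integer,
the divisions on the right are exact as well.
-/

open Finset
open scoped Nat

namespace Nat

theorem factorization_le_of_dvd_mul_of_not_dvd {a c x p : ℕ} (hx : x ≠ 0) (h : a ∣ c * x)
    (hpc : ¬p ∣ c) : a.factorization p ≤ x.factorization p := by
  have hc : c ≠ 0 := by rintro rfl; exact hpc (dvd_zero p)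
  have ha : a ≠ 0 := by rintro rfl; exact mul_ne_zero hc hx (zero_dvd_iff.mp h)
  calc a.factorization p ≤ (c * x).factorization p :=
        (Nat.factorization_le_iff_dvd ha (mul_ne_zero hc hx)).2 h p
    _ = x.factorization p := by
      rw [Nat.factorization_mul hc hx, Finsupp.add_apply,
        Nat.factorization_eq_zero_of_not_dvd hpc, zero_add]

theorem factorization_add_one_eq_zero_of_dvd {a p : ℕ} (hp : p.Prime) (h : p ∣ 2 * a + 1) :
    (a + 1).factorization p = 0 := by
  refine Nat.factorization_eq_zero_of_not_dvd fun ha =>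
    hp.not_dvd_one ((Nat.dvd_add_right h).mp ?_)
  rw [show 2 * a + 1 + 1 = 2 * (a + 1) by ring]
  exact dvd_mul_of_dvd_right ha 2

theorem add_one_dvd_mul_choose_two_mul_add (a b : ℕ) :
    a + 1 ∣ (2 * a + b + 2) * (2 * a + b + 1).choose b := by
  have h := Nat.choose_mul_succ_eq (2 * a + b + 1) b
  rw [show 2 * a + b + 1 + 1 - b = 2 * (a + 1) by omega] at h
  exact ⟨2 * (2 * a + b + 1 + 1).choose b, by rw [mul_comm, h]; ring⟩

theorem add_one_dvd_mul_choose_add_two_mul (a b : ℕ) :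
    a + 1 ∣ (2 * b + 1) * (a + 2 * b + 1).choose a := by
  have h := Nat.choose_succ_right_eq (a + 2 * b + 1) a
  rw [show a + 2 * b + 1 - a = 2 * b + 1 by omega] at h
  exact ⟨(a + 2 * b + 1).choose (a + 1), by rw [mul_comm, ← h, mul_comm]⟩

theorem factorization_add_one_le_choose_two_mul_add (a b : ℕ) {p : ℕ} (hp : p.Prime)
    (hpb : p ∣ 2 * b + 1) :
    (a + 1).factorization p ≤ ((2 * a + b + 1).choose b).factorization p := by
  by_cases hpa : p ∣ a + 1
  · refine factorization_le_of_dvd_mul_of_not_dvd (Nat.choose_pos (by omega)).ne'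
      (add_one_dvd_mul_choose_two_mul_add a b) fun hc =>
        hp.not_dvd_one ((Nat.dvd_add_right (dvd_mul_of_dvd_right hc 2)).mp ?_)
    rw [show 2 * (2 * a + b + 2) + 1 = 4 * (a + 1) + (2 * b + 1) by ring]
    exact dvd_add (dvd_mul_of_dvd_right hpa 4) hpb
  · rw [Nat.factorization_eq_zero_of_not_dvd hpa]
    exact Nat.zero_le _

theorem factorization_add_one_le_choose_add_two_mul (a b : ℕ) {p : ℕ} (hpb : ¬p ∣ 2 * b + 1) :
    (a + 1).factorization p ≤ ((a + 2 * b + 1).choose a).factorization p :=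
  factorization_le_of_dvd_mul_of_not_dvd (Nat.choose_pos (by omega)).ne'
    (add_one_dvd_mul_choose_add_two_mul a b) hpb

theorem add_one_mul_add_one_dvd_choose_mul_choose (i j : ℕ) :
    (i + 1) * (j + 1) ∣ (2 * i + j + 1).choose j * (i + 2 * j + 1).choose i := by
  have hX : (2 * i + j + 1).choose j ≠ 0 := (Nat.choose_pos (by omega)).ne'
  have hY : (i + 2 * j + 1).choose i ≠ 0 := (Nat.choose_pos (by omega)).ne'
  refine (Nat.factorization_prime_le_iff_dvd (by positivity) (mul_ne_zero hX hY)).1 fun p hp => ?_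
  rw [Nat.factorization_mul (by omega) (by omega), Nat.factorization_mul hX hY, Finsupp.add_apply,
    Finsupp.add_apply]
  by_cases hj : p ∣ 2 * j + 1
  · have hle := factorization_add_one_le_choose_two_mul_add i j hp hj
    rw [factorization_add_one_eq_zero_of_dvd hp hj]
    omega
  by_cases hi : p ∣ 2 * i + 1
  · have hle := factorization_add_one_le_choose_two_mul_add j i hp hi
    rw [show 2 * j + i + 1 = i + 2 * j + 1 by ring] at hle
    rw [factorization_add_one_eq_zero_of_dvd hp hi]
    omega
  have hleY := factorization_add_one_le_choose_add_two_mul i j hj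
  have hleX := factorization_add_one_le_choose_add_two_mul j i hi
  rw [show j + 2 * i + 1 = 2 * i + j + 1 by ring] at hleX
  omega

end Nat

theorem Finset.Nat.sum_antidiagonal_sub {M : Type*} [AddCommGroup M] (g : ℕ → ℕ → M) (m : ℕ) :
    ∑ p ∈ antidiagonal m, (g (p.1 + 1) p.2 - g p.1 (p.2 + 1)) = g (m + 1) 0 - g 0 (m + 1) := by
  have h := Finset.Nat.sum_antidiagonal_succ (n := m) (f := fun p => g p.1 p.2)
  rw [Finset.Nat.sum_antidiagonal_succ'] at h
  rw [sum_sub_distrib, sub_eq_sub_iff_add_eq_add, add_comm]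
  exact h.symm

def fishCount (i j : ℕ) : ℚ :=
  ((2 * i + j + 1).choose j * (i + 2 * j + 1).choose i : ℚ) / ((i + 1) * (j + 1))

theorem fishCount_eq_factorial (i j : ℕ) :
    fishCount i j = (2 * i + j + 1)! * (i + 2 * j + 1)! /
      ((i + 1)! * (j + 1)! * (2 * i + 1)! * (2 * j + 1)!) := by
  rw [fishCount, show 2 * i + j + 1 = j + (2 * i + 1) by ring,
    show i + 2 * j + 1 = i + (2 * j + 1) by ring, Nat.cast_add_choose, Nat.cast_add_choose]
  push_cast [Nat.factorial_succ]
  field_simp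

theorem fishCount_comm (i j : ℕ) : fishCount j i = fishCount i j := by
  rw [fishCount_eq_factorial, fishCount_eq_factorial, show 2 * j + i + 1 = i + 2 * j + 1 by ring,
    show j + 2 * i + 1 = 2 * i + j + 1 by ring]
  ring

theorem fishCount_zero_left (j : ℕ) : fishCount 0 j = 1 := by
  simp only [fishCount, mul_zero, zero_add, Nat.choose_succ_self_right, Nat.cast_add, Nat.cast_one,
    Nat.choose_zero_right, mul_one, CharP.cast_eq_zero, one_mul, div_self_eq_one₀, ne_eq]
  positivity

theorem fishCount_zero_right (i : ℕ) : fishCount i 0 = 1 := by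
  rw [← fishCount_comm, fishCount_zero_left]

theorem fishCount_succ_left (i j : ℕ) :
    fishCount (i + 1) j = (2 * i + j + 2) * (2 * i + j + 3) * (i + 2 * j + 2) /
      ((2 * i + 2) * (2 * i + 3) * (i + 2)) * fishCount i j := by
  rw [fishCount_eq_factorial, fishCount_eq_factorial,
    show 2 * (i + 1) + j + 1 = 2 * i + j + 1 + 1 + 1 by ring,
    show i + 1 + 2 * j + 1 = i + 2 * j + 1 + 1 by ring,
    show 2 * (i + 1) + 1 = 2 * i + 1 + 1 + 1 by ring]
  push_cast [Nat.factorial_succ]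
  field_simp
  ring

theorem fishCount_succ_right (i j : ℕ) :
    fishCount i (j + 1) = (i + 2 * j + 2) * (i + 2 * j + 3) * (2 * i + j + 2) /
      ((2 * j + 2) * (2 * j + 3) * (j + 2)) * fishCount i j := by
  rw [← fishCount_comm, fishCount_succ_left, fishCount_comm]
  ring

/-- Zeilberger's certificate for `fishCount` along antidiagonals, shifted by one in the first
index so that it vanishes on the boundary `i = 0`. -/
def fishCert : ℕ → ℕ → ℚ
  | 0, _ => 0
  | i + 1, j => -((2 * i + j + 2) * (2 * i ^ 3 + 13 * i ^ 2 * j + 34 * i * j ^ 2 + 23 * j ^ 3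
      + 15 * i ^ 2 + 71 * i * j + 82 * j ^ 2 + 37 * i + 89 * j + 30) / ((i + j + 1) * (i + j + 2)))
    * fishCount i j

theorem fishCount_telescope {i j m : ℕ} (h : i + j = m) :
    2 * (m + 3) * (2 * m + 5) * fishCount i (j + 1) - 3 * (3 * m + 4) * (3 * m + 5) * fishCount i j
      = fishCert (i + 1) j - fishCert i (j + 1) := by
  subst h
  cases i with
  | zero =>
    simp only [fishCert, fishCount_zero_left]
    push_cast
    field_simp
    ring
  | succ i =>
    simp only [fishCert, fishCount_succ_right, fishCount_succ_left]
    push_cast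
    field_simp
    ring

/-- The number of fighting fish of size `m + 1`. -/
def fishSum (m : ℕ) : ℚ := ∑ p ∈ antidiagonal m, fishCount p.1 p.2

theorem fishSum_succ (m : ℕ) :
    2 * (m + 3) * (2 * m + 5) * fishSum (m + 1) = 3 * (3 * m + 4) * (3 * m + 5) * fishSum m := by
  have hsum : 2 * (m + 3) * (2 * m + 5) * fishSum (m + 1)
        - 3 * (3 * m + 4) * (3 * m + 5) * fishSum m
      = 2 * (m + 3) * (2 * m + 5) * fishCount (m + 1) 0 + fishCert (m + 1) 0
        - fishCert 0 (m + 1) := by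
    rw [fishSum, fishSum, Finset.Nat.sum_antidiagonal_succ', mul_add, mul_sum, mul_sum,
      add_sub_assoc, ← sum_sub_distrib,
      sum_congr rfl fun p hp => fishCount_telescope (mem_antidiagonal.mp hp),
      Finset.Nat.sum_antidiagonal_sub, add_sub_assoc]
  have hcorner : 2 * (m + 3) * (2 * m + 5) * fishCount (m + 1) 0 + fishCert (m + 1) 0 = 0 := by
    simp only [fishCert, fishCount_zero_right]
    push_cast
    field_simp
    ring
  rw [hcorner, fishCert, zero_sub_zero] at hsum
  linarith

theorem Nat.cast_choose_three_mul (n : ℕ) :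
    ((3 * n).choose n : ℚ) = (3 * n)! / (n ! * (2 * n)!) := by
  rw [show 3 * n = n + 2 * n by ring, Nat.cast_add_choose]

theorem fishSum_eq (m : ℕ) :
    fishSum m = 2 * (3 * (m + 1)).choose (m + 1) / ((m + 2) * (2 * m + 3)) := by
  induction m with
  | zero => simp [fishSum, fishCount]
  | succ m ih =>
    have hrec : fishSum (m + 1)
        = 3 * (3 * m + 4) * (3 * m + 5) / (2 * (m + 3) * (2 * m + 5)) * fishSum m := by
      rw [div_mul_eq_mul_div, eq_div_iff (by positivity), mul_comm, fishSum_succ]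
    rw [hrec, ih, Nat.cast_choose_three_mul, Nat.cast_choose_three_mul,
      show 3 * (m + 1 + 1) = 3 * (m + 1) + 1 + 1 + 1 by ring,
      show 2 * (m + 1 + 1) = 2 * (m + 1) + 1 + 1 by ring]
    push_cast [Nat.factorial_succ]
    field_simp
    ring

theorem sum_two_param_eq_fighting_fish (n : ℕ) (hn : 0 < n) :
    ∑ i ∈ Finset.range n,
      Nat.choose (2 * i + (n - 1 - i) + 1) (n - 1 - i) *
        Nat.choose (i + 2 * (n - 1 - i) + 1) i / ((i + 1) * ((n - 1 - i) + 1)) =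
    2 * Nat.choose (3 * n) n / ((n + 1) * (2 * n + 1)) := by
  obtain ⟨m, rfl⟩ : ∃ m, n = m + 1 := ⟨n - 1, by omega⟩
  simp only [Nat.add_sub_cancel]
  have hterms : ∀ i ∈ range (m + 1),
      (((2 * i + (m - i) + 1).choose (m - i) * (i + 2 * (m - i) + 1).choose i
        / ((i + 1) * (m - i + 1)) : ℕ) : ℚ) = fishCount i (m - i) := fun i _ => by
    rw [Nat.cast_div (Nat.add_one_mul_add_one_dvd_choose_mul_choose i (m - i)) (by positivity),
      fishCount]
    push_cast
    rfl
  have hsum := fishSum_eq m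
  rw [fishSum, Nat.sum_antidiagonal_eq_sum_range_succ fishCount, ← sum_congr rfl hterms,
    ← Nat.cast_sum, eq_div_iff (by positivity)] at hsum
  exact (Nat.div_eq_of_eq_mul_left (by positivity) (by exact_mod_cast hsum.symm)).symm
end

section
/- For every natural number n, the number of symmetric fighting fish of size 2n+1 equals C(3n+1,n)/(n+1), i.e., equals the number of ordered pairs of ternary trees with n total nodes; as a pure identity: C(3n+1,n)/(n+1) = C(3n,n)/(2n+1) + C(3n,n+1)/(2n+1) for all n ≥ 1. -/
/-! Adjacent binomial coefficients satisfy `C(3n+1,n+1)·(n+1) = C(3n+1,n)·(2n+1)` with coprime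
factors `n+1` and `2n+1`, so the two quotients agree: `C(3n+1,n)/(n+1) = C(3n+1,n+1)/(2n+1)`.
Pascal's rule splits `C(3n+1,n+1) = C(3n,n) + C(3n,n+1)`, and truncated division distributes over
this sum because `2n+1 ∣ C(3n,n)`, which follows from `C(3n,n)·(3n+1) = C(3n+1,n)·(2n+1)` and
`gcd(2n+1, 3n+1) = 1`. -/

namespace Nat

theorem coprime_mul_add_one_add_one_mul_add_one (a n : ℕ) :
    Coprime (a * n + 1) ((a + 1) * n + 1) := by
  have hsplit : (a + 1) * n + 1 = n + (a * n + 1) := by ring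
  rw [hsplit, coprime_add_self_right]
  simp

theorem div_eq_div_of_mul_eq_mul_of_coprime {a b x y : ℕ} (h : a * x = b * y)
    (hxy : Coprime x y) (hx : 0 < x) (hy : 0 < y) : a / y = b / x := by
  obtain ⟨c, rfl⟩ : y ∣ a := hxy.symm.dvd_of_dvd_mul_right ⟨b, by rw [h, mul_comm]⟩
  have hb : b = c * x := by
    apply Nat.eq_of_mul_eq_mul_right hy
    rw [← h]; ring
  rw [hb, Nat.mul_div_cancel_left c hy, Nat.mul_div_cancel c hx]

theorem succ_sub_dvd_choose_of_coprime {n k : ℕ} (h : Coprime (n + 1 - k) (n + 1)) :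
    n + 1 - k ∣ n.choose k :=
  h.dvd_of_dvd_mul_right ⟨(n + 1).choose k, by rw [choose_mul_succ_eq, mul_comm]⟩

theorem choose_div_succ_eq_choose_succ_div_sub {n k : ℕ} (hk : k < n)
    (h : Coprime (k + 1) (n - k)) : n.choose k / (k + 1) = n.choose (k + 1) / (n - k) :=
  div_eq_div_of_mul_eq_mul_of_coprime (choose_succ_right_eq n k).symm h.symm
    (Nat.sub_pos_of_lt hk) k.succ_pos

end Nat

open Nat in
theorem symmetric_fighting_fish_identity_general (n : ℕ) :
    Nat.choose (3 * n + 1) n / (n + 1) =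
      Nat.choose (3 * n) n / (2 * n + 1) + Nat.choose (3 * n) (n + 1) / (2 * n + 1) := by
  have hsub : 3 * n + 1 - n = 2 * n + 1 := by omega
  have hcop₁ : Coprime (n + 1) (2 * n + 1) := by
    simpa using coprime_mul_add_one_add_one_mul_add_one 1 n
  have hcop₂ : Coprime (2 * n + 1) (3 * n + 1) := coprime_mul_add_one_add_one_mul_add_one 2 n
  have hdvd : 2 * n + 1 ∣ (3 * n).choose n :=
    hsub ▸ succ_sub_dvd_choose_of_coprime (hsub ▸ hcop₂)
  calc (3 * n + 1).choose n / (n + 1)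
      = (3 * n + 1).choose (n + 1) / (2 * n + 1) := by
        rw [choose_div_succ_eq_choose_succ_div_sub (by omega) (hsub ▸ hcop₁), hsub]
    _ = ((3 * n).choose n + (3 * n).choose (n + 1)) / (2 * n + 1) := by rw [choose_succ_succ']
    _ = _ := Nat.add_div_of_dvd_right hdvd

theorem symmetric_fighting_fish_identity (n : ℕ) (hn : 1 ≤ n) :
    Nat.choose (3 * n + 1) n / (n + 1) =
      Nat.choose (3 * n) n / (2 * n + 1) + Nat.choose (3 * n) (n + 1) / (2 * n + 1) :=
  symmetric_fighting_fish_identity_general n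
end

section
/- For every positive integer n, (2n+1) divides C(3n, n+1), and C(3n,n+1)/(2n+1) = C(3n+1,n)/(n+1) − C(3n,n)/(2n+1). -/
/-!
Write `t` for the common value `C(3n+1, n) / (n+1) = C(3n+1, n+1) / (2n+1)`: since
`C(3n+1, n+1) (n+1) = C(3n+1, n) (2n+1)` and `n+1`, `2n+1` are coprime, both quotients are exact
and equal. Likewise `(3n+1) C(3n, n) = (n+1) C(3n+1, n+1)` with `3n+1` prime to `2n+1` makes the
ternary Catalan number `u = C(3n, n) / (2n+1)` an integer, and Pascal's rule
`C(3n+1, n+1) = C(3n, n) + C(3n, n+1)` then gives `C(3n, n+1) = (2n+1) (t - u)`.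
-/

namespace Nat

theorem exists_eq_mul_of_mul_eq_mul_of_coprime {a b c d : ℕ} (h : a * b = c * d)
    (hbd : Coprime b d) (hd : d ≠ 0) : ∃ t, a = d * t ∧ c = b * t := by
  obtain ⟨t, rfl⟩ : d ∣ a := hbd.symm.dvd_of_dvd_mul_right (h ▸ dvd_mul_left d c)
  exact ⟨t, rfl, mul_right_cancel₀ hd (by rw [← h]; ring)⟩

theorem exists_choose_eq_mul_of_coprime {N k : ℕ} (hk : k < N) (hcop : Coprime (k + 1) (N - k)) :
    ∃ t, N.choose (k + 1) = (N - k) * t ∧ N.choose k = (k + 1) * t :=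
  exists_eq_mul_of_mul_eq_mul_of_coprime (choose_succ_right_eq N k) hcop (by omega)

theorem exists_choose_three_mul_add_one_eq_mul (n : ℕ) :
    ∃ t, (3 * n + 1).choose (n + 1) = (2 * n + 1) * t ∧ (3 * n + 1).choose n = (n + 1) * t := by
  have hcop : Coprime (n + 1) (3 * n + 1 - n) := by
    rw [show 3 * n + 1 - n = n + (n + 1) by omega]
    simp
  simpa [show 3 * n + 1 - n = 2 * n + 1 by omega] using
    exists_choose_eq_mul_of_coprime (by omega) hcop

theorem two_mul_add_one_dvd_choose_three_mul (n : ℕ) : 2 * n + 1 ∣ (3 * n).choose n := by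
  obtain ⟨t, ht, -⟩ := exists_choose_three_mul_add_one_eq_mul n
  have hcop : Coprime (2 * n + 1) (3 * n + 1) := by
    rw [show 3 * n + 1 = 2 * n + 1 + n by ring, show 2 * n + 1 = n + (n + 1) by ring]
    simp
  refine hcop.dvd_of_dvd_mul_left ⟨t * (n + 1), ?_⟩
  rw [add_one_mul_choose_eq, ht, mul_assoc]

end Nat

theorem even_tails_symmetric_fish_count_general (n : ℕ) :
    (2 * n + 1) ∣ Nat.choose (3 * n) (n + 1) ∧
    Nat.choose (3 * n) (n + 1) / (2 * n + 1) =
      Nat.choose (3 * n + 1) n / (n + 1) - Nat.choose (3 * n) n / (2 * n + 1) := by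
  obtain ⟨t, hsucc, hchoose⟩ := Nat.exists_choose_three_mul_add_one_eq_mul n
  obtain ⟨u, hu⟩ := Nat.two_mul_add_one_dvd_choose_three_mul n
  have hpascal : (3 * n).choose (n + 1) = (2 * n + 1) * (t - u) := by
    have := Nat.choose_succ_succ' (3 * n) n
    rw [Nat.mul_sub]
    omega
  have hpos : 0 < 2 * n + 1 := by omega
  refine ⟨⟨t - u, hpascal⟩, ?_⟩
  rw [hpascal, hchoose, hu, Nat.mul_div_cancel_left _ hpos, Nat.mul_div_cancel_left _ hpos,
    Nat.mul_div_cancel_left _ n.succ_pos]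

theorem even_tails_symmetric_fish_count (n : ℕ) (hn : 0 < n) :
    (2 * n + 1) ∣ Nat.choose (3 * n) (n + 1) ∧
    Nat.choose (3 * n) (n + 1) / (2 * n + 1) =
      Nat.choose (3 * n + 1) n / (n + 1) - Nat.choose (3 * n) n / (2 * n + 1) :=
  even_tails_symmetric_fish_count_general n
end
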